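/- arXiv:2501.15213 — 2 statements merged into one kernel-verified Lean document; each statement's English description precedes it below -/
import Mathlib

section
/- For sigma, tau in Sp(g, F_2) and any characteristic m in F_2^{2g}, one has epsilon_m(tau sigma) = epsilon_m(sigma) * epsilon_{sigma{m}}(tau), where epsilon_m(sigma) = (-1)^{tr(B'C) + a'(B'D)a + b'(A'C)b} for sigma = (A B; C D) and m = (a; b). -/
open Matrix BigOperators

/-- A characteristic: a vector in `F₂^{2g}`, indexed by `Fin g ⊕ Fin g`
(the first block is `a`, the second is `b`). -/
abbrev Char2 (g : ℕ) := (Fin g ⊕ Fin g) → ZMod 2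

/-- The `a`-part of a characteristic. -/
def aPart {g : ℕ} (m : Char2 g) : Fin g → ZMod 2 := fun i => m (Sum.inl i)

/-- The `b`-part of a characteristic. -/
def bPart {g : ℕ} (m : Char2 g) : Fin g → ZMod 2 := fun i => m (Sum.inr i)

/-- A characteristic `m = (a;b)` is even if `a'b = 0`. -/
def IsEvenChar {g : ℕ} (m : Char2 g) : Prop := aPart m ⬝ᵥ bPart m = 0

/-- A characteristic `m = (a;b)` is odd if `a'b = 1`. -/
def IsOddChar {g : ℕ} (m : Char2 g) : Prop := aPart m ⬝ᵥ bPart m = 1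

instance {g : ℕ} : DecidablePred (IsEvenChar (g := g)) := fun m => by
  unfold IsEvenChar; infer_instance

instance {g : ℕ} : DecidablePred (IsOddChar (g := g)) := fun m => by
  unfold IsOddChar; infer_instance

/-- The type of `2g × 2g` matrices over `F₂`. -/
abbrev SpMat (g : ℕ) := Matrix (Fin g ⊕ Fin g) (Fin g ⊕ Fin g) (ZMod 2)

/-- The offset `((CD')₀ ; (AB')₀)` appearing in the affine action. -/
def offVec {g : ℕ} (σ : SpMat g) : Char2 g :=
  Sum.elim (Matrix.diag (σ.toBlocks₂₁ * (σ.toBlocks₂₂)ᵀ))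
           (Matrix.diag (σ.toBlocks₁₁ * (σ.toBlocks₁₂)ᵀ))

/-- The affine action `σ{m} = (σ')⁻¹ m + ((CD')₀ ; (AB')₀)`. -/
noncomputable def affAct {g : ℕ} (σ : SpMat g) (m : Char2 g) : Char2 g :=
  (σᵀ)⁻¹ *ᵥ m + offVec σ

/-- The sign `(-1)^x` for `x : F₂`. -/
def sgn2 (x : ZMod 2) : ℤ := if x = 0 then 1 else -1

/-- The quadratic form `M[x] = x' M x`. -/
def quadF {g : ℕ} (M : Matrix (Fin g) (Fin g) (ZMod 2)) (x : Fin g → ZMod 2) : ZMod 2 :=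
  x ⬝ᵥ (M *ᵥ x)

/-- `ε_m(σ) = (-1)^{tr(B'C) + (B'D)[a] + (A'C)[b]}`. -/
def epsChar {g : ℕ} (m : Char2 g) (σ : SpMat g) : ℤ :=
  sgn2 (Matrix.trace ((σ.toBlocks₁₂)ᵀ * σ.toBlocks₂₁)
    + quadF ((σ.toBlocks₁₂)ᵀ * σ.toBlocks₂₂) (aPart m)
    + quadF ((σ.toBlocks₁₁)ᵀ * σ.toBlocks₂₁) (bPart m))

/-- The symplectic pairing `<m,n> = a'β + b'α`. -/
def pairing {g : ℕ} (m n : Char2 g) : ZMod 2 :=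
  aPart m ⬝ᵥ bPart n + bPart m ⬝ᵥ aPart n

/-- `e(m,n) = (-1)^{<m,n>}`. -/
def eSign {g : ℕ} (m n : Char2 g) : ℤ := sgn2 (pairing m n)

/-! ### Auxiliary lemmas -/

lemma z2_add_self' (x : ZMod 2) : x + x = 0 := by fin_cases x <;> rfl
lemma z2_mul_self' (x : ZMod 2) : x * x = x := by fin_cases x <;> rfl
lemma z2_neg' (x : ZMod 2) : -x = x := by fin_cases x <;> rfl

lemma sgn2_add (x y : ZMod 2) : sgn2 (x + y) = sgn2 x * sgn2 y := by
  fin_cases x <;> fin_cases y <;> rfl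

lemma matneg' {α β : Type*} (M : Matrix α β (ZMod 2)) : -M = M := by
  ext i j; exact z2_neg' _

lemma mat_add_self' {α β : Type*} (M : Matrix α β (ZMod 2)) : M + M = 0 := by
  ext i j; exact z2_add_self' _

lemma symm_entry' {g : ℕ} {S : Matrix (Fin g) (Fin g) (ZMod 2)} (hS : Sᵀ = S) (i j : Fin g) :
    S i j = S j i := by
  conv_lhs => rw [← hS, Matrix.transpose_apply]

/-- Sum of a swap-symmetric function over all pairs collapses to the diagonal in char 2. -/
lemma sum_pair' {n : Type*} [Fintype n] [DecidableEq n] (f : n → n → ZMod 2)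
    (hf : ∀ i j, f i j = f j i) :
    ∑ i, ∑ j, f i j = ∑ i, f i i := by
  classical
  rw [← Finset.sum_product']
  rw [← Finset.sum_filter_add_sum_filter_not (Finset.univ ×ˢ Finset.univ)
    (fun p => p.1 = p.2) (fun p => f p.1 p.2)]
  have h2 : ∑ p ∈ (Finset.univ ×ˢ Finset.univ).filter (fun p : n × n => ¬ p.1 = p.2),
      f p.1 p.2 = 0 := by
    apply Finset.sum_involution (fun a _ => Prod.swap a)
    · intro a ha
      show f a.1 a.2 + f a.2 a.1 = 0
      rw [hf a.2 a.1]
      exact z2_add_self' _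
    · intro a ha _
      simp only [Finset.mem_filter] at ha
      intro hcon
      exact ha.2 (congrArg Prod.fst hcon).symm
    · intro a ha
      simp only [Finset.mem_filter, Finset.mem_product, Finset.mem_univ, true_and,
        Prod.fst_swap, Prod.snd_swap] at *
      exact fun h => ha h.symm
    · intro a ha; rfl
  have h1 : ∑ p ∈ (Finset.univ ×ˢ Finset.univ).filter (fun p : n × n => p.1 = p.2),
      f p.1 p.2 = ∑ i, f i i := by
    apply Finset.sum_nbij' (fun p => p.1) (fun i => (i, i)) <;>
      simp +contextual [Finset.mem_filter, Prod.ext_iff]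
  rw [h1, h2, add_zero]

lemma quadF_add {g : ℕ} (M N : Matrix (Fin g) (Fin g) (ZMod 2)) (x) :
    quadF (M + N) x = quadF M x + quadF N x := by
  simp [quadF, Matrix.add_mulVec, dotProduct_add]

lemma quadF_transpose {g : ℕ} (M : Matrix (Fin g) (Fin g) (ZMod 2)) (x) :
    quadF Mᵀ x = quadF M x := by
  rw [quadF, dotProduct_mulVec, vecMul_transpose, dotProduct_comm, quadF]

/-- For symmetric `S` over `F₂`, the quadratic form is linear: `x'Sx = diag(S)·x`. -/
lemma quadF_symm {g : ℕ} (S : Matrix (Fin g) (Fin g) (ZMod 2)) (hS : Sᵀ = S) (x) :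
    quadF S x = S.diag ⬝ᵥ x := by
  have : quadF S x = ∑ i, ∑ j, x i * S i j * x j := by
    simp [quadF, dotProduct, mulVec, Finset.mul_sum, mul_assoc]
  rw [this, sum_pair' (fun i j => x i * S i j * x j) (fun i j => by
    show x i * S i j * x j = x j * S j i * x i
    rw [symm_entry' hS i j]; ring)]
  simp only [Matrix.diag, dotProduct]
  congr 1; funext i
  calc x i * S i i * x i = S i i * (x i * x i) := by ring
    _ = S i i * x i := by rw [z2_mul_self']

lemma quadF_conj {g : ℕ} (S B : Matrix (Fin g) (Fin g) (ZMod 2)) (hS : Sᵀ = S) (x) :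
    quadF (Bᵀ * S * B) x = S.diag ⬝ᵥ (B *ᵥ x) := by
  rw [quadF, Matrix.mul_assoc, ← Matrix.mulVec_mulVec, ← Matrix.mulVec_mulVec,
    dotProduct_mulVec, vecMul_transpose, ← quadF, quadF_symm S hS]

/-- Trace of a product of symmetric matrices over `F₂` is `diag·diag`. -/
lemma trace_symm_mul' {g : ℕ} (S Y : Matrix (Fin g) (Fin g) (ZMod 2))
    (hS : Sᵀ = S) (hY : Yᵀ = Y) :
    (S * Y).trace = S.diag ⬝ᵥ Y.diag := by
  have : (S * Y).trace = ∑ i, ∑ j, S i j * Y i j := by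
    simp only [Matrix.trace, Matrix.diag, Matrix.mul_apply]
    congr 1; funext i; congr 1; funext j
    rw [symm_entry' hY j i]
  rw [this, sum_pair' (fun i j => S i j * Y i j) (fun i j => by
    show S i j * Y i j = S j i * Y j i
    rw [symm_entry' hS i j, symm_entry' hY i j])]
  rfl

/-- The block relations satisfied by a symplectic matrix over `F₂`. -/
lemma sympl_rels' {g : ℕ} (σ : SpMat g) (hσ : σ ∈ Matrix.symplecticGroup (Fin g) (ZMod 2)) :
    σ.toBlocks₁₁ * σ.toBlocks₂₂ᵀ + σ.toBlocks₁₂ * σ.toBlocks₂₁ᵀ = 1 ∧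
    (σ.toBlocks₁₁ * σ.toBlocks₁₂ᵀ)ᵀ = σ.toBlocks₁₁ * σ.toBlocks₁₂ᵀ ∧
    (σ.toBlocks₂₁ * σ.toBlocks₂₂ᵀ)ᵀ = σ.toBlocks₂₁ * σ.toBlocks₂₂ᵀ := by
  rw [SymplecticGroup.mem_iff] at hσ
  set A := σ.toBlocks₁₁ with hA
  set B := σ.toBlocks₁₂ with hB
  set C := σ.toBlocks₂₁ with hC
  set D := σ.toBlocks₂₂ with hD
  rw [← Matrix.fromBlocks_toBlocks σ, ← hA, ← hB, ← hC, ← hD] at hσ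
  rw [Matrix.J] at hσ
  rw [matneg' (1 : Matrix (Fin g) (Fin g) (ZMod 2))] at hσ
  simp only [Matrix.fromBlocks_transpose, Matrix.fromBlocks_multiply, Matrix.mul_zero,
    Matrix.zero_mul, Matrix.mul_one, Matrix.one_mul,
    zero_add, add_zero] at hσ
  have e11 := congrArg Matrix.toBlocks₁₁ hσ
  have e12 := congrArg Matrix.toBlocks₁₂ hσ
  have e22 := congrArg Matrix.toBlocks₂₂ hσ
  simp only [Matrix.toBlocks_fromBlocks₁₁, Matrix.toBlocks_fromBlocks₁₂,
    Matrix.toBlocks_fromBlocks₂₂] at e11 e12 e22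
  refine ⟨by rw [add_comm] at e12; exact e12, ?_, ?_⟩
  · rw [Matrix.transpose_mul, Matrix.transpose_transpose]
    have := add_eq_zero_iff_eq_neg.mp e11
    rw [matneg'] at this
    exact this
  · rw [Matrix.transpose_mul, Matrix.transpose_transpose]
    have := add_eq_zero_iff_eq_neg.mp e22
    rw [matneg'] at this
    exact this

lemma toBlocks_transpose₁₁ {g : ℕ} (σ : SpMat g) : σᵀ.toBlocks₁₁ = σ.toBlocks₁₁ᵀ := rfl
lemma toBlocks_transpose₁₂ {g : ℕ} (σ : SpMat g) : σᵀ.toBlocks₁₂ = σ.toBlocks₂₁ᵀ := rfl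
lemma toBlocks_transpose₂₁ {g : ℕ} (σ : SpMat g) : σᵀ.toBlocks₂₁ = σ.toBlocks₁₂ᵀ := rfl
lemma toBlocks_transpose₂₂ {g : ℕ} (σ : SpMat g) : σᵀ.toBlocks₂₂ = σ.toBlocks₂₂ᵀ := rfl

/-- The transposed block relations. -/
lemma sympl_rels_T {g : ℕ} (σ : SpMat g) (hσ : σ ∈ Matrix.symplecticGroup (Fin g) (ZMod 2)) :
    σ.toBlocks₁₁ᵀ * σ.toBlocks₂₂ + σ.toBlocks₂₁ᵀ * σ.toBlocks₁₂ = 1 ∧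
    (σ.toBlocks₁₁ᵀ * σ.toBlocks₂₁)ᵀ = σ.toBlocks₁₁ᵀ * σ.toBlocks₂₁ ∧
    (σ.toBlocks₁₂ᵀ * σ.toBlocks₂₂)ᵀ = σ.toBlocks₁₂ᵀ * σ.toBlocks₂₂ := by
  have h := sympl_rels' σᵀ (SymplecticGroup.transpose_mem hσ)
  rw [toBlocks_transpose₁₁, toBlocks_transpose₁₂, toBlocks_transpose₂₁, toBlocks_transpose₂₂,
    Matrix.transpose_transpose, Matrix.transpose_transpose] at h
  exact h

/-- The inverse of the transpose of a symplectic matrix, in block form. -/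
lemma sigmaT_inv {g : ℕ} (σ : SpMat g) (hσ : σ ∈ Matrix.symplecticGroup (Fin g) (ZMod 2)) :
    (σᵀ)⁻¹ = Matrix.fromBlocks σ.toBlocks₂₂ σ.toBlocks₂₁ σ.toBlocks₁₂ σ.toBlocks₁₁ := by
  obtain ⟨r1, r2, r3⟩ := sympl_rels_T σ hσ
  set A := σ.toBlocks₁₁; set B := σ.toBlocks₁₂; set C := σ.toBlocks₂₁; set D := σ.toBlocks₂₂
  apply Matrix.inv_eq_right_inv
  conv_lhs => rw [← Matrix.fromBlocks_toBlocks σ]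
  rw [Matrix.fromBlocks_transpose, Matrix.fromBlocks_multiply, ← Matrix.fromBlocks_one]
  have q2 : Aᵀ * C + Cᵀ * A = 0 := by
    have h : Cᵀ * A = Aᵀ * C := by
      conv_lhs => rw [← Matrix.transpose_transpose A, ← Matrix.transpose_mul, r2]
    rw [h, mat_add_self']
  have q3 : Bᵀ * D + Dᵀ * B = 0 := by
    have h : Dᵀ * B = Bᵀ * D := by
      conv_lhs => rw [← Matrix.transpose_transpose B, ← Matrix.transpose_mul, r3]
    rw [h, mat_add_self']
  have q4 : Bᵀ * C + Dᵀ * A = 1 := by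
    have h := congrArg Matrix.transpose r1
    rw [Matrix.transpose_add, Matrix.transpose_mul, Matrix.transpose_mul,
      Matrix.transpose_transpose, Matrix.transpose_transpose, Matrix.transpose_one] at h
    rw [add_comm] at h
    exact h
  rw [r1, q2, q3, q4]

/-- The affine action in block coordinates. -/
lemma affAct_parts {g : ℕ} (σ : SpMat g) (hσ : σ ∈ Matrix.symplecticGroup (Fin g) (ZMod 2))
    (m : Char2 g) :
    aPart (affAct σ m) = σ.toBlocks₂₂ *ᵥ aPart m + σ.toBlocks₂₁ *ᵥ bPart m
        + (σ.toBlocks₂₁ * σ.toBlocks₂₂ᵀ).diag ∧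
    bPart (affAct σ m) = σ.toBlocks₁₂ *ᵥ aPart m + σ.toBlocks₁₁ *ᵥ bPart m
        + (σ.toBlocks₁₁ * σ.toBlocks₁₂ᵀ).diag := by
  have hm : m = Sum.elim (aPart m) (bPart m) := by funext x; cases x <;> rfl
  have key : affAct σ m = Sum.elim
      (σ.toBlocks₂₂ *ᵥ aPart m + σ.toBlocks₂₁ *ᵥ bPart m + (σ.toBlocks₂₁ * σ.toBlocks₂₂ᵀ).diag)
      (σ.toBlocks₁₂ *ᵥ aPart m + σ.toBlocks₁₁ *ᵥ bPart m + (σ.toBlocks₁₁ * σ.toBlocks₁₂ᵀ).diag) := by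
    unfold affAct offVec
    rw [sigmaT_inv σ hσ]
    conv_lhs => rw [hm]
    rw [Matrix.fromBlocks_mulVec]
    funext x
    cases x <;> simp
  constructor <;> (funext i; rw [key]) <;> rfl

set_option maxHeartbeats 2000000 in
/-- the cocycle relation `ε_m(τσ) = ε_m(σ) ε_{σ{m}}(τ)`. -/
theorem eps_cocycle (g : ℕ) (σ τ : SpMat g)
    (hσ : σ ∈ Matrix.symplecticGroup (Fin g) (ZMod 2))
    (hτ : τ ∈ Matrix.symplecticGroup (Fin g) (ZMod 2)) (m : Char2 g) :
    epsChar m (τ * σ) = epsChar m σ * epsChar (affAct σ m) τ := by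
  obtain ⟨hs1, hs2, hs3⟩ := sympl_rels' σ hσ
  obtain ⟨hst1, hst2, hst3⟩ := sympl_rels_T σ hσ
  obtain ⟨htt1, htt2, htt3⟩ := sympl_rels_T τ hτ
  obtain ⟨haffa, haffb⟩ := affAct_parts σ hσ m
  set A := σ.toBlocks₁₁ with hA
  set B := σ.toBlocks₁₂ with hB
  set C := σ.toBlocks₂₁ with hC
  set D := σ.toBlocks₂₂ with hD
  set E := τ.toBlocks₁₁ with hE
  set F := τ.toBlocks₁₂ with hF
  set G := τ.toBlocks₂₁ with hG
  set H := τ.toBlocks₂₂ with hH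
  set a := aPart m with ha
  set b := bPart m with hb
  have hmul : τ * σ = Matrix.fromBlocks (E*A + F*C) (E*B + F*D) (G*A + H*C) (G*B + H*D) := by
    conv_lhs => rw [← Matrix.fromBlocks_toBlocks τ, ← Matrix.fromBlocks_toBlocks σ,
      ← hA, ← hB, ← hC, ← hD, ← hE, ← hF, ← hG, ← hH]
    rw [Matrix.fromBlocks_multiply]
  have hb11 : (τ * σ).toBlocks₁₁ = E*A + F*C := by rw [hmul, Matrix.toBlocks_fromBlocks₁₁]
  have hb12 : (τ * σ).toBlocks₁₂ = E*B + F*D := by rw [hmul, Matrix.toBlocks_fromBlocks₁₂]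
  have hb21 : (τ * σ).toBlocks₂₁ = G*A + H*C := by rw [hmul, Matrix.toBlocks_fromBlocks₂₁]
  have hb22 : (τ * σ).toBlocks₂₂ = G*B + H*D := by rw [hmul, Matrix.toBlocks_fromBlocks₂₂]
  have key : Matrix.trace ((E*B + F*D)ᵀ * (G*A + H*C))
      + quadF ((E*B + F*D)ᵀ * (G*B + H*D)) a
      + quadF ((E*A + F*C)ᵀ * (G*A + H*C)) b
      = (Matrix.trace (Bᵀ * C) + quadF (Bᵀ * D) a + quadF (Aᵀ * C) b)
      + (Matrix.trace (Fᵀ * G) + quadF (Fᵀ * H) (aPart (affAct σ m))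
          + quadF (Eᵀ * G) (bPart (affAct σ m))) := by
    have m1 : (E*B + F*D)ᵀ * (G*A + H*C)
        = Bᵀ*Eᵀ*G*A + Bᵀ*Eᵀ*H*C + Dᵀ*Fᵀ*G*A + Dᵀ*Fᵀ*H*C := by
      rw [Matrix.transpose_add, Matrix.transpose_mul, Matrix.transpose_mul]; noncomm_ring
    have m2 : (E*B + F*D)ᵀ * (G*B + H*D)
        = Bᵀ*(Eᵀ*G)*B + Bᵀ*Eᵀ*H*D + Dᵀ*Fᵀ*G*B + Dᵀ*(Fᵀ*H)*D := by
      rw [Matrix.transpose_add, Matrix.transpose_mul, Matrix.transpose_mul]; noncomm_ring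
    have m3 : (E*A + F*C)ᵀ * (G*A + H*C)
        = Aᵀ*(Eᵀ*G)*A + Aᵀ*Eᵀ*H*C + Cᵀ*Fᵀ*G*A + Cᵀ*(Fᵀ*H)*C := by
      rw [Matrix.transpose_add, Matrix.transpose_mul, Matrix.transpose_mul]; noncomm_ring
    have p1 : Matrix.trace (Bᵀ*Eᵀ*G*A) = (Eᵀ*G).diag ⬝ᵥ (A*Bᵀ).diag := by
      rw [show Bᵀ*Eᵀ*G*A = Bᵀ*((Eᵀ*G)*A) by noncomm_ring, Matrix.trace_mul_comm,
        show (Eᵀ*G)*A*Bᵀ = (Eᵀ*G)*(A*Bᵀ) by noncomm_ring, trace_symm_mul' _ _ htt2 hs2]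
    have p2 : Matrix.trace (Dᵀ*Fᵀ*H*C) = (Fᵀ*H).diag ⬝ᵥ (C*Dᵀ).diag := by
      rw [show Dᵀ*Fᵀ*H*C = Dᵀ*((Fᵀ*H)*C) by noncomm_ring, Matrix.trace_mul_comm,
        show (Fᵀ*H)*C*Dᵀ = (Fᵀ*H)*(C*Dᵀ) by noncomm_ring, trace_symm_mul' _ _ htt3 hs3]
    have hEH : Eᵀ*H = 1 + Gᵀ*F := by
      calc Eᵀ*H = Eᵀ*H + (Gᵀ*F + Gᵀ*F) := by rw [mat_add_self', add_zero]
        _ = (Eᵀ*H + Gᵀ*F) + Gᵀ*F := by abel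
        _ = 1 + Gᵀ*F := by rw [htt1]
    have p3 : Matrix.trace (Bᵀ*Eᵀ*H*C) + Matrix.trace (Dᵀ*Fᵀ*G*A)
        = Matrix.trace (Bᵀ*C) + Matrix.trace (Fᵀ*G) := by
      have t1 : Matrix.trace (Bᵀ*Eᵀ*H*C)
          = Matrix.trace (Bᵀ*C) + Matrix.trace ((Fᵀ*G)*(B*Cᵀ)) := by
        rw [show Bᵀ*Eᵀ*H*C = Bᵀ*((Eᵀ*H)*C) by noncomm_ring, hEH,
          show Bᵀ*((1 + Gᵀ*F)*C) = Bᵀ*C + Bᵀ*(Gᵀ*(F*C)) by noncomm_ring, Matrix.trace_add]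
        congr 1
        rw [← Matrix.trace_transpose (Bᵀ*(Gᵀ*(F*C))),
          show (Bᵀ*(Gᵀ*(F*C)))ᵀ = Cᵀ*(Fᵀ*(G*B)) by
            simp [Matrix.transpose_mul, Matrix.mul_assoc],
          Matrix.trace_mul_comm,
          show Fᵀ*(G*B)*Cᵀ = (Fᵀ*G)*(B*Cᵀ) by noncomm_ring]
      have t2 : Matrix.trace (Dᵀ*Fᵀ*G*A) = Matrix.trace ((Fᵀ*G)*(A*Dᵀ)) := by
        rw [show Dᵀ*Fᵀ*G*A = Dᵀ*((Fᵀ*G)*A) by noncomm_ring, Matrix.trace_mul_comm,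
          show (Fᵀ*G)*A*Dᵀ = (Fᵀ*G)*(A*Dᵀ) by noncomm_ring]
      rw [t1, t2, show Matrix.trace (Bᵀ*C) + Matrix.trace ((Fᵀ*G)*(B*Cᵀ))
          + Matrix.trace ((Fᵀ*G)*(A*Dᵀ))
          = Matrix.trace (Bᵀ*C) + (Matrix.trace ((Fᵀ*G)*(A*Dᵀ))
          + Matrix.trace ((Fᵀ*G)*(B*Cᵀ))) from by ring,
        ← Matrix.trace_add, ← Matrix.mul_add, hs1, Matrix.mul_one]
    have q1 : quadF (Bᵀ*(Eᵀ*G)*B) a = (Eᵀ*G).diag ⬝ᵥ (B *ᵥ a) := quadF_conj _ _ htt2 a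
    have q2 : quadF (Dᵀ*(Fᵀ*H)*D) a = (Fᵀ*H).diag ⬝ᵥ (D *ᵥ a) := quadF_conj _ _ htt3 a
    have q3 : quadF (Aᵀ*(Eᵀ*G)*A) b = (Eᵀ*G).diag ⬝ᵥ (A *ᵥ b) := quadF_conj _ _ htt2 b
    have q4 : quadF (Cᵀ*(Fᵀ*H)*C) b = (Fᵀ*H).diag ⬝ᵥ (C *ᵥ b) := quadF_conj _ _ htt3 b
    have q5 : quadF (Bᵀ*Eᵀ*H*D) a + quadF (Dᵀ*Fᵀ*G*B) a = quadF (Bᵀ*D) a := by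
      have h1 : quadF (Dᵀ*Fᵀ*G*B) a = quadF (Bᵀ*Gᵀ*F*D) a := by
        rw [← quadF_transpose (Bᵀ*Gᵀ*F*D) a]
        congr 1
        simp [Matrix.transpose_mul, Matrix.mul_assoc]
      rw [h1, ← quadF_add,
        show Bᵀ*Eᵀ*H*D + Bᵀ*Gᵀ*F*D = Bᵀ*((Eᵀ*H + Gᵀ*F)*D) by noncomm_ring, htt1,
        Matrix.one_mul]
    have q6 : quadF (Aᵀ*Eᵀ*H*C) b + quadF (Cᵀ*Fᵀ*G*A) b = quadF (Aᵀ*C) b := by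
      have h1 : quadF (Cᵀ*Fᵀ*G*A) b = quadF (Aᵀ*Gᵀ*F*C) b := by
        rw [← quadF_transpose (Aᵀ*Gᵀ*F*C) b]
        congr 1
        simp [Matrix.transpose_mul, Matrix.mul_assoc]
      rw [h1, ← quadF_add,
        show Aᵀ*Eᵀ*H*C + Aᵀ*Gᵀ*F*C = Aᵀ*((Eᵀ*H + Gᵀ*F)*C) by noncomm_ring, htt1,
        Matrix.one_mul]
    have r5 : quadF (Fᵀ*H) (aPart (affAct σ m))
        = (Fᵀ*H).diag ⬝ᵥ (D *ᵥ a) + (Fᵀ*H).diag ⬝ᵥ (C *ᵥ b)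
          + (Fᵀ*H).diag ⬝ᵥ (C*Dᵀ).diag := by
      rw [quadF_symm _ htt3, haffa, dotProduct_add, dotProduct_add]
    have r6 : quadF (Eᵀ*G) (bPart (affAct σ m))
        = (Eᵀ*G).diag ⬝ᵥ (B *ᵥ a) + (Eᵀ*G).diag ⬝ᵥ (A *ᵥ b)
          + (Eᵀ*G).diag ⬝ᵥ (A*Bᵀ).diag := by
      rw [quadF_symm _ htt2, haffb, dotProduct_add, dotProduct_add]
    rw [m1, Matrix.trace_add, Matrix.trace_add, Matrix.trace_add,
      m2, quadF_add, quadF_add, quadF_add,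
      m3, quadF_add, quadF_add, quadF_add,
      p1, p2, q1, q2, q3, q4, r5, r6]
    linear_combination p3 + q5 + q6
  rw [epsChar, epsChar, epsChar, hb11, hb12, hb21, hb22, key, sgn2_add]
end

section
/- The operator M^+ on the span of {e_m : m even} commutes with the action of Sp(g, F_2) given by sigma(e_m) = epsilon_m(sigma) e_{sigma{m}}. -/
open Matrix BigOperators

/-- Fay's matrix `M⁺`, indexed by even characteristics: the image of the basis
vector `e_m` is `∑_{n even} e(m,n) e_n`. -/
noncomputable def fayMplusMat (g : ℕ) :
    Matrix {m : Char2 g // IsEvenChar m} {m : Char2 g // IsEvenChar m} ℂ :=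
  Matrix.of fun n m => ((eSign m.1 n.1 : ℤ) : ℂ)

/-- The matrix of the action of `σ` given by `σ(e_m) = ε_m(σ) e_{σ{m}}`. -/
noncomputable def actMat (g : ℕ) (σ : SpMat g) :
    Matrix {m : Char2 g // IsEvenChar m} {m : Char2 g // IsEvenChar m} ℂ :=
  Matrix.of fun n m => if affAct σ m.1 = n.1 then ((epsChar m.1 σ : ℤ) : ℂ) else 0

lemma sgn2_eq_one_iff (x : ZMod 2) : sgn2 x = 1 ↔ x = 0 := by
  revert x; decide

lemma sgn2_sum {ι : Type*} (s : Finset ι) (f : ι → ZMod 2) :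
    sgn2 (∑ i ∈ s, f i) = ∏ i ∈ s, sgn2 (f i) := by
  classical
  induction s using Finset.induction_on with
  | empty => rfl
  | insert i s hi ih => rw [Finset.sum_insert hi, Finset.prod_insert hi, sgn2_add, ih]

lemma mulVec_dotProduct_mulVec {k m n R : Type*} [Fintype k] [Fintype m] [Fintype n]
    [CommSemiring R] (M : Matrix k m R) (N : Matrix k n R) (x : m → R) (y : n → R) :
    (M *ᵥ x) ⬝ᵥ (N *ᵥ y) = x ⬝ᵥ ((Mᵀ * N) *ᵥ y) := by
  rw [← mulVec_mulVec, dotProduct_mulVec x, vecMul_transpose]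

section Characteristics

variable {g : ℕ}

def charParity (m : Char2 g) : ZMod 2 := aPart m ⬝ᵥ bPart m

lemma isEvenChar_iff (m : Char2 g) : IsEvenChar m ↔ charParity m = 0 := Iff.rfl

lemma aPart_add (x y : Char2 g) : aPart (x + y) = aPart x + aPart y := rfl

lemma bPart_add (x y : Char2 g) : bPart (x + y) = bPart x + bPart y := rfl

lemma aPart_sumElim (u v : Fin g → ZMod 2) : aPart (Sum.elim u v) = u := rfl

lemma bPart_sumElim (u v : Fin g → ZMod 2) : bPart (Sum.elim u v) = v := rfl

lemma pairing_comm (x y : Char2 g) : pairing x y = pairing y x := by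
  simp only [pairing, dotProduct_comm (aPart x), dotProduct_comm (bPart x), add_comm]

lemma pairing_self (x : Char2 g) : pairing x x = 0 := by
  rw [pairing, dotProduct_comm, CharTwo.add_self_eq_zero]

lemma pairing_add_left (x y z : Char2 g) :
    pairing (x + y) z = pairing x z + pairing y z := by
  simp only [pairing, aPart_add, bPart_add, add_dotProduct]
  abel

lemma pairing_add_right (x y z : Char2 g) :
    pairing x (y + z) = pairing x y + pairing x z := by
  rw [pairing_comm, pairing_add_left, pairing_comm y, pairing_comm z]

lemma charParity_add (x y : Char2 g) :
    charParity (x + y) = charParity x + charParity y + pairing x y := by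
  simp only [charParity, pairing, aPart_add, bPart_add, add_dotProduct, dotProduct_add,
    dotProduct_comm (bPart x) (aPart y)]
  abel

lemma charParity_single_one (i : Fin g ⊕ Fin g) : charParity (Pi.single i 1 : Char2 g) = 0 := by
  rcases i with k | k <;> simp [charParity, aPart, bPart, dotProduct, Pi.single_apply]

lemma sum_sgn2_charParity : ∑ m : Char2 g, sgn2 (charParity m) = 2 ^ g := by
  let e : (Fin g → ZMod 2 × ZMod 2) ≃ Char2 g :=
    (Equiv.arrowProdEquivProdArrow _ _ _).trans (Equiv.sumArrowEquivProdArrow _ _ _).symm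
  have hfactor : ∀ x, sgn2 (charParity (e x)) = ∏ i, sgn2 ((x i).1 * (x i).2) :=
    fun x => sgn2_sum Finset.univ fun i => (x i).1 * (x i).2
  have hpair : ∑ p : ZMod 2 × ZMod 2, sgn2 (p.1 * p.2) = 2 := by decide
  rw [← e.sum_comp, Finset.sum_congr rfl fun x _ => hfactor x,
    ← Fintype.prod_sum fun (_ : Fin g) (p : ZMod 2 × ZMod 2) => sgn2 (p.1 * p.2), hpair,
    Finset.prod_const, Finset.card_univ, Fintype.card_fin]

lemma J_zmod_two_eq_fromBlocks : J (Fin g) (ZMod 2) = fromBlocks 0 1 1 0 := by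
  rw [J]
  congr
  ext i j
  exact CharTwo.neg_eq _

lemma neg_J_zmod_two : -J (Fin g) (ZMod 2) = J (Fin g) (ZMod 2) := by
  rw [← J_transpose, J_zmod_two_eq_fromBlocks, fromBlocks_transpose]
  simp

lemma J_mulVec (m : Char2 g) : J (Fin g) (ZMod 2) *ᵥ m = Sum.elim (bPart m) (aPart m) := by
  ext (i | i) <;> simp [J_zmod_two_eq_fromBlocks, fromBlocks_mulVec, aPart, bPart]

lemma pairing_eq_dotProduct_J_mulVec (m n : Char2 g) :
    pairing m n = m ⬝ᵥ (J (Fin g) (ZMod 2) *ᵥ n) := by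
  simp [J_mulVec, pairing, dotProduct, Fintype.sum_sum_type, aPart, bPart]

lemma charParity_J_mulVec (m : Char2 g) :
    charParity (J (Fin g) (ZMod 2) *ᵥ m) = charParity m := by
  simp only [charParity, J_mulVec]
  exact dotProduct_comm _ _

lemma J_mulVec_offVec (σ : SpMat g) :
    J (Fin g) (ZMod 2) *ᵥ offVec σ = fun i => charParity (σ i) := by
  ext (k | k) <;> simp [J_mulVec, offVec, charParity, aPart, bPart, dotProduct, mul_apply] <;> rfl

def epsPhase (σ : SpMat g) (m : Char2 g) : ZMod 2 :=
  quadF (σ.toBlocks₁₂ᵀ * σ.toBlocks₂₂) (aPart m)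
    + quadF (σ.toBlocks₁₁ᵀ * σ.toBlocks₂₁) (bPart m)

lemma epsChar_eq (m : Char2 g) (σ : SpMat g) :
    epsChar m σ = sgn2 (trace (σ.toBlocks₁₂ᵀ * σ.toBlocks₂₁) + epsPhase σ m) := by
  rw [epsChar, epsPhase, add_assoc]

section Symplectic

variable {σ : SpMat g}

lemma pairing_transpose_mulVec (hσ : σ ∈ symplecticGroup (Fin g) (ZMod 2)) (x y : Char2 g) :
    pairing (σᵀ *ᵥ x) (σᵀ *ᵥ y) = pairing x y := by
  rw [pairing_eq_dotProduct_J_mulVec, pairing_eq_dotProduct_J_mulVec, mulVec_transpose,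
    ← dotProduct_mulVec, mulVec_mulVec, mulVec_mulVec, SymplecticGroup.mem_iff.mp hσ]

lemma transpose_inv_eq_J_mul_mul_J (hσ : σ ∈ symplecticGroup (Fin g) (ZMod 2)) :
    (σᵀ)⁻¹ = J (Fin g) (ZMod 2) * σ * J (Fin g) (ZMod 2) := by
  rw [SymplecticGroup.inv_eq_symplectic_inv _ (SymplecticGroup.transpose_mem hσ),
    transpose_transpose, neg_J_zmod_two]

lemma transpose_mul_transpose_inv (hσ : σ ∈ symplecticGroup (Fin g) (ZMod 2)) :
    σᵀ * (σᵀ)⁻¹ = 1 :=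
  mul_nonsing_inv _ (SymplecticGroup.symplectic_det (SymplecticGroup.transpose_mem hσ))

lemma charParity_transpose_inv_mulVec (hσ : σ ∈ symplecticGroup (Fin g) (ZMod 2))
    (w : Char2 g) :
    charParity ((σᵀ)⁻¹ *ᵥ w) = charParity (σ *ᵥ J (Fin g) (ZMod 2) *ᵥ w) := by
  rw [transpose_inv_eq_J_mul_mul_J hσ, ← mulVec_mulVec, ← mulVec_mulVec, charParity_J_mulVec]

lemma toBlocks_transpose_mul_add_eq_one (hσ : σ ∈ symplecticGroup (Fin g) (ZMod 2)) :
    σ.toBlocks₂₁ᵀ * σ.toBlocks₁₂ + σ.toBlocks₁₁ᵀ * σ.toBlocks₂₂ = 1 := by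
  have h := congrArg toBlocks₁₂ (SymplecticGroup.mem_iff'.mp hσ)
  rw [← fromBlocks_toBlocks σ] at h
  simpa [J_zmod_two_eq_fromBlocks, fromBlocks_transpose, fromBlocks_multiply, add_comm] using h

lemma epsPhase_eq (hσ : σ ∈ symplecticGroup (Fin g) (ZMod 2)) (w : Char2 g) :
    epsPhase σ w = charParity (σ *ᵥ J (Fin g) (ZMod 2) *ᵥ w) + charParity w := by
  rw [J_mulVec, ← fromBlocks_toBlocks σ, fromBlocks_mulVec, charParity, charParity,
    aPart_sumElim, bPart_sumElim, epsPhase, quadF, quadF, toBlocks_fromBlocks₁₁,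
    toBlocks_fromBlocks₁₂, toBlocks_fromBlocks₂₁, toBlocks_fromBlocks₂₂,
    Sum.elim_comp_inl, Sum.elim_comp_inr, ← mulVec_dotProduct_mulVec,
    ← mulVec_dotProduct_mulVec]
  set A := σ.toBlocks₁₁; set B := σ.toBlocks₁₂
  set C := σ.toBlocks₂₁; set D := σ.toBlocks₂₂
  set a := aPart w; set b := bPart w
  have hcross : (A *ᵥ b) ⬝ᵥ (D *ᵥ a) + (B *ᵥ a) ⬝ᵥ (C *ᵥ b) = a ⬝ᵥ b := by
    rw [dotProduct_comm (B *ᵥ a), mulVec_dotProduct_mulVec, mulVec_dotProduct_mulVec,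
      ← dotProduct_add, ← add_mulVec, add_comm, toBlocks_transpose_mul_add_eq_one hσ,
      one_mulVec, dotProduct_comm]
  rw [← hcross, add_dotProduct, dotProduct_add, dotProduct_add]
  ring_nf
  reduce_mod_char

lemma charParity_add_charParity_transpose_mulVec (hσ : σ ∈ symplecticGroup (Fin g) (ZMod 2))
    (u : Char2 g) : charParity u + charParity (σᵀ *ᵥ u) = pairing u (offVec σ) := by
  let f : Char2 g →+ ZMod 2 := AddMonoidHom.mk'
    (fun u => charParity u + charParity (σᵀ *ᵥ u) + pairing u (offVec σ)) fun x y => by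
      rw [charParity_add, mulVec_add, charParity_add, pairing_transpose_mulVec hσ,
        pairing_add_left]
      ring_nf
      reduce_mod_char
  suffices f = 0 from CharTwo.add_eq_zero.mp (DFunLike.congr_fun this u)
  refine AddMonoidHom.functions_ext _ _ _ fun i x => ?_
  obtain rfl | rfl : x = 0 ∨ x = 1 := by revert x; decide
  · simp
  · simp only [f, AddMonoidHom.mk'_apply, AddMonoidHom.zero_apply, charParity_single_one,
      pairing_eq_dotProduct_J_mulVec, J_mulVec_offVec, single_one_dotProduct, mulVec_single_one,
      col_transpose, zero_add]
    exact CharTwo.add_self_eq_zero _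

lemma pairing_transpose_inv_mulVec (hσ : σ ∈ symplecticGroup (Fin g) (ZMod 2)) (x y : Char2 g) :
    pairing ((σᵀ)⁻¹ *ᵥ x) ((σᵀ)⁻¹ *ᵥ y) = pairing x y := by
  rw [← pairing_transpose_mulVec hσ, mulVec_mulVec, mulVec_mulVec,
    transpose_mul_transpose_inv hσ, one_mulVec, one_mulVec]

lemma pairing_transpose_inv_mulVec_offVec (hσ : σ ∈ symplecticGroup (Fin g) (ZMod 2))
    (w : Char2 g) : pairing ((σᵀ)⁻¹ *ᵥ w) (offVec σ) = epsPhase σ w := by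
  rw [← charParity_add_charParity_transpose_mulVec hσ, mulVec_mulVec,
    transpose_mul_transpose_inv hσ, one_mulVec, charParity_transpose_inv_mulVec hσ,
    epsPhase_eq hσ]

lemma pairing_affAct (hσ : σ ∈ symplecticGroup (Fin g) (ZMod 2)) (m k : Char2 g) :
    pairing (affAct σ m) (affAct σ k) = pairing m k + epsPhase σ m + epsPhase σ k := by
  rw [affAct, affAct, pairing_add_left, pairing_add_right, pairing_add_right,
    pairing_transpose_inv_mulVec hσ, pairing_transpose_inv_mulVec_offVec hσ,
    pairing_comm (offVec σ), pairing_transpose_inv_mulVec_offVec hσ, pairing_self, add_zero,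
    add_assoc]

lemma charParity_affAct (hσ : σ ∈ symplecticGroup (Fin g) (ZMod 2)) (m : Char2 g) :
    charParity (affAct σ m) = charParity m + charParity (offVec σ) := by
  rw [affAct, charParity_add, ← charParity_add_charParity_transpose_mulVec hσ, mulVec_mulVec,
    transpose_mul_transpose_inv hσ, one_mulVec]
  linear_combination CharTwo.add_self_eq_zero (charParity ((σᵀ)⁻¹ *ᵥ m))

lemma affAct_bijective (hσ : σ ∈ symplecticGroup (Fin g) (ZMod 2)) :
    Function.Bijective (affAct σ) := by
  refine Finite.injective_iff_bijective.mp fun m k h => ?_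
  have := congrArg (σᵀ *ᵥ ·) (add_right_cancel h)
  simpa [mulVec_mulVec, transpose_mul_transpose_inv hσ] using this

lemma charParity_offVec (hσ : σ ∈ symplecticGroup (Fin g) (ZMod 2)) :
    charParity (offVec σ) = 0 := by
  have hsum := (affAct_bijective hσ).sum_comp fun m => sgn2 (charParity m)
  simp only [charParity_affAct hσ, sgn2_add, ← Finset.sum_mul, sum_sgn2_charParity] at hsum
  rw [← sgn2_eq_one_iff]
  exact mul_left_cancel₀ (by positivity) (hsum.trans (mul_one _).symm)

noncomputable def evenAffEquiv (hσ : σ ∈ symplecticGroup (Fin g) (ZMod 2)) :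
    {m : Char2 g // IsEvenChar m} ≃ {m : Char2 g // IsEvenChar m} :=
  (Equiv.ofBijective _ (affAct_bijective hσ)).subtypeEquiv fun m => by
    rw [Equiv.ofBijective_apply, isEvenChar_iff, isEvenChar_iff, charParity_affAct hσ,
      charParity_offVec hσ, add_zero]

lemma actMat_apply (hσ : σ ∈ symplecticGroup (Fin g) (ZMod 2))
    (n m : {m : Char2 g // IsEvenChar m}) :
    actMat g σ n m = if evenAffEquiv hσ m = n then (epsChar m.1 σ : ℂ) else 0 := by
  simp only [actMat, of_apply, Subtype.ext_iff]
  rfl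

lemma mul_actMat_apply (hσ : σ ∈ symplecticGroup (Fin g) (ZMod 2))
    (N : Matrix {m : Char2 g // IsEvenChar m} {m : Char2 g // IsEvenChar m} ℂ)
    (n m : {m : Char2 g // IsEvenChar m}) :
    (N * actMat g σ) n m = N n (evenAffEquiv hσ m) * epsChar m.1 σ := by
  simp [mul_apply, actMat_apply hσ]

lemma actMat_mul_apply (hσ : σ ∈ symplecticGroup (Fin g) (ZMod 2))
    (N : Matrix {m : Char2 g // IsEvenChar m} {m : Char2 g // IsEvenChar m} ℂ)
    (k m : {m : Char2 g // IsEvenChar m}) :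
    (actMat g σ * N) (evenAffEquiv hσ k) m = epsChar k.1 σ * N k m := by
  simp [mul_apply, actMat_apply hσ]

lemma eSign_affAct_mul_epsChar (hσ : σ ∈ symplecticGroup (Fin g) (ZMod 2)) (m k : Char2 g) :
    eSign (affAct σ m) (affAct σ k) * epsChar m σ = epsChar k σ * eSign m k := by
  rw [eSign, eSign, epsChar_eq, epsChar_eq, ← sgn2_add, ← sgn2_add, pairing_affAct hσ]
  congr 1
  linear_combination CharTwo.add_self_eq_zero (epsPhase σ m)

end Symplectic

end Characteristics

/-- the operator `M⁺` commutes with the action of `Sp(g,F₂)`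
given by `σ(e_m) = ε_m(σ) e_{σ{m}}`. -/
theorem fay_Mplus_commutes (g : ℕ) (σ : SpMat g)
    (hσ : σ ∈ Matrix.symplecticGroup (Fin g) (ZMod 2)) :
    fayMplusMat g * actMat g σ = actMat g σ * fayMplusMat g := by
  ext n m
  obtain ⟨k, rfl⟩ := (evenAffEquiv hσ).surjective n
  rw [mul_actMat_apply hσ, actMat_mul_apply hσ]
  simp only [fayMplusMat, of_apply]
  exact_mod_cast eSign_affAct_mul_epsChar hσ m.1 k.1
end
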